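/- arXiv:2402.04651 — 5 statements merged into one kernel-verified Lean document; each statement's English description precedes it below -/
import Mathlib

section
/- For λ > 1 and α ∈ (0, 2π) with α ≠ π, there is no solution γ of the equation |sin(γ(α − π))| = λ|sin(γπ)| with 0 < γ ≤ 1/2. -/
/-! Since `|γ (α - π)| ≤ γ π ≤ π / 2` and `sin` increases on `[-π/2, π/2]`, the left side is at most
`sin (γ π)`, which is positive and hence strictly less than `λ sin (γ π)`. -/

open Real

lemma abs_sin_le_sin_of_abs_le {x y : ℝ} (hxy : |x| ≤ y) (hy : y ≤ π / 2) :
    |sin x| ≤ sin y := by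
  rw [abs_sin_eq_sin_abs_of_abs_le_pi (by linarith [pi_pos])]
  exact sin_le_sin_of_le_of_le_pi_div_two (by linarith [abs_nonneg x]) hy hxy

theorem stmt_1_general (lam α : ℝ) (hlam : 1 < lam) (hα0 : 0 < α) (hα2 : α < 2 * π) :
    ¬ ∃ γ : ℝ, 0 < γ ∧ γ ≤ 1 / 2 ∧
      |Real.sin (γ * (α - π))| = lam * |Real.sin (γ * π)| := by
  rintro ⟨γ, hγ0, hγ12, heq⟩
  have hγπ : γ * π ≤ π / 2 := by nlinarith [pi_pos]
  have hsin : 0 < sin (γ * π) :=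
    sin_pos_of_pos_of_lt_pi (mul_pos hγ0 pi_pos) (by linarith [pi_pos])
  have hα : |α - π| ≤ π := abs_sub_le_iff.2 ⟨by linarith, by linarith⟩
  have hbound : |sin (γ * (α - π))| ≤ sin (γ * π) := by
    refine abs_sin_le_sin_of_abs_le ?_ hγπ
    rw [abs_mul, abs_of_pos hγ0]
    exact mul_le_mul_of_nonneg_left hα hγ0.le
  rw [abs_of_pos hsin] at heq
  have hlarger : sin (γ * π) < lam * sin (γ * π) := (lt_mul_iff_one_lt_left hsin).2 hlam
  linarith

theorem stmt_1 (lam α : ℝ) (hlam : 1 < lam) (hα0 : 0 < α) (hα2 : α < 2 * π)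
    (hαπ : α ≠ π) :
    ¬ ∃ γ : ℝ, 0 < γ ∧ γ ≤ 1 / 2 ∧
      |Real.sin (γ * (α - π))| = lam * |Real.sin (γ * π)| :=
  stmt_1_general lam α hlam hα0 hα2
end

section
/- Let λ > 1 and π < α < 2π. If γ₁ ∈ (1/2, 1) satisfies sin(γ₁(α − π)) = λ sin(γ₁π) and γ₂ ∈ (1, 3/2) satisfies sin(γ₂(α − π)) = −λ sin(γ₂π), then sin(γ₁α)·sin((γ₁−1)α) > 0 and sin(γ₂α)·sin((γ₂−1)α) < 0; in particular sin(γ₁α)sin((γ₁−1)α) ≠ sin(γ₂α)sin((γ₂−1)α). -/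
/-!
Since `λ > 1`, each equation forces `sin (γ(α - π))` strictly above `|sin (γπ)|`.
Comparing the two sides on a half-period where `sin` is monotone gives `π < γ₁α` and
`γ₂α < 2π`. Then `γ₁α` and `γ₂α` lie in `(π, 2π)`, while `(γ₁ - 1)α ∈ (-π, 0)` and
`(γ₂ - 1)α ∈ (0, π)`, which fixes the signs.
-/

open Real

namespace Real

lemma lt_of_sin_lt_sin {x y : ℝ} (hy : -(π / 2) ≤ y) (hx : x ≤ π / 2) (h : sin x < sin y) :
    x < y :=
  lt_of_not_ge fun hyx => (sin_le_sin_of_le_of_le_pi_div_two hy hx hyx).not_gt h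

lemma sin_neg_of_pi_lt_of_lt_two_pi {x : ℝ} (h₁ : π < x) (h₂ : x < 2 * π) : sin x < 0 := by
  rw [← sin_sub_two_pi]
  exact sin_neg_of_neg_of_neg_pi_lt (by linarith) (by linarith)

end Real

lemma pi_lt_mul_of_sin_mul_sub_pi_eq {lam α γ : ℝ} (hlam : 1 < lam) (hα : π < α)
    (hγ₁ : 1 / 2 < γ) (hγ₂ : γ < 1) (heq : sin (γ * (α - π)) = lam * sin (γ * π)) :
    π < γ * α := by
  have hsin : 0 < sin (γ * π) :=
    sin_pos_of_pos_of_lt_pi (by nlinarith [pi_pos]) (by nlinarith [pi_pos])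
  have hlt : sin ((1 - γ) * π) < sin (γ * (α - π)) := by
    rw [show (1 - γ) * π = π - γ * π by ring, sin_pi_sub, heq]
    nlinarith
  have := lt_of_sin_lt_sin (by nlinarith [pi_pos]) (by nlinarith [pi_pos]) hlt
  linarith

lemma mul_lt_two_pi_of_sin_mul_sub_pi_eq_neg {lam α γ : ℝ} (hlam : 1 < lam) (hα₁ : π < α)
    (hα₂ : α < 2 * π) (hγ₁ : 1 < γ) (hγ₂ : γ < 3 / 2)
    (heq : sin (γ * (α - π)) = -(lam * sin (γ * π))) :
    γ * α < 2 * π := by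
  have hsin : sin (γ * π) < 0 :=
    sin_neg_of_pi_lt_of_lt_two_pi (by nlinarith [pi_pos]) (by nlinarith [pi_pos])
  have hlt : sin ((γ - 1) * π) < sin (π - γ * (α - π)) := by
    rw [show (γ - 1) * π = γ * π - π by ring, sin_sub_pi, sin_pi_sub, heq]
    nlinarith
  have := lt_of_sin_lt_sin (by nlinarith [pi_pos]) (by nlinarith [pi_pos]) hlt
  linarith

theorem stmt_5 (lam α γ₁ γ₂ : ℝ) (hlam : 1 < lam) (hα0 : π < α) (hα2 : α < 2 * π)
    (hγ11 : 1 / 2 < γ₁) (hγ12 : γ₁ < 1)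
    (hγ21 : 1 < γ₂) (hγ22 : γ₂ < 3 / 2)
    (heq1 : Real.sin (γ₁ * (α - π)) = lam * Real.sin (γ₁ * π))
    (heq2 : Real.sin (γ₂ * (α - π)) = -(lam * Real.sin (γ₂ * π))) :
    0 < Real.sin (γ₁ * α) * Real.sin ((γ₁ - 1) * α) ∧
    Real.sin (γ₂ * α) * Real.sin ((γ₂ - 1) * α) < 0 ∧
    Real.sin (γ₁ * α) * Real.sin ((γ₁ - 1) * α) ≠
      Real.sin (γ₂ * α) * Real.sin ((γ₂ - 1) * α) := by
  have hpi := pi_pos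
  have h₁ : π < γ₁ * α := pi_lt_mul_of_sin_mul_sub_pi_eq hlam hα0 hγ11 hγ12 heq1
  have h₂ : γ₂ * α < 2 * π :=
    mul_lt_two_pi_of_sin_mul_sub_pi_eq_neg hlam hα0 hα2 hγ21 hγ22 heq2
  have hpos : 0 < sin (γ₁ * α) * sin ((γ₁ - 1) * α) :=
    mul_pos_of_neg_of_neg (sin_neg_of_pi_lt_of_lt_two_pi h₁ (by nlinarith))
      (sin_neg_of_neg_of_neg_pi_lt (by nlinarith) (by nlinarith))
  have hneg : sin (γ₂ * α) * sin ((γ₂ - 1) * α) < 0 :=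
    mul_neg_of_neg_of_pos (sin_neg_of_pi_lt_of_lt_two_pi (by nlinarith) h₂)
      (sin_pos_of_pos_of_lt_pi (by nlinarith) (by nlinarith))
  exact ⟨hpos, hneg, (hneg.trans hpos).ne'⟩
end

section
/- Let n ≥ 3 and let x, x' ∈ (ℝ²)ⁿ be vertex tuples of two polygons with d(x, x') = min_{j} max_{i} |x_{i+j} − x'_i|. For any point p on the boundary polyline of x, i.e. p = c·x_i + (1−c)·x_{i+1} with c ∈ [0,1], the distance from p to the boundary polyline of x' is at most d(x, x'). Consequently the Hausdorff distance between the two closed polygonal boundaries is at most d(x, x'). -/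
/-!
Fix a cyclic shift `j` realising `d(x, x')`. The edge `[x_i, x_{i+1}]` is then matched with the
edge `[x'_{i-j}, x'_{i-j+1}]` of `x'`, whose endpoints are within `d` of its own; since the
distance between corresponding convex combinations is at most the larger endpoint distance,
every point of the edge lies within `d` of the boundary of `x'`. The shift `-j` shows that `d` is
symmetric, so the same bound holds with the roles swapped, which bounds the Hausdorff distance.
-/

open Finset

/-- The cyclic min-max distance on `n`-tuples of points of the plane:
`d(x,x') = min_{j=0,…,n-1} max_{i=1,…,n} |x_{i+j} - x'_i|` (indices mod `n`). -/
noncomputable def cyclicDist (n : ℕ) (hn : 3 ≤ n)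
    (x x' : Fin n → EuclideanSpace ℝ (Fin 2)) : ℝ :=
  Finset.univ.inf' ⟨(⟨0, by omega⟩ : Fin n), Finset.mem_univ _⟩
    (fun j => Finset.univ.sup' ⟨(⟨0, by omega⟩ : Fin n), Finset.mem_univ _⟩
      (fun i => dist (x (i + j)) (x' i)))

/-- The boundary polyline of the polygon with (cyclically indexed) vertices `x`:
the union of the closed segments `[x_i, x_{i+1}]`. -/
def polyline (n : ℕ) (hn : 3 ≤ n) (x : Fin n → EuclideanSpace ℝ (Fin 2)) :
    Set (EuclideanSpace ℝ (Fin 2)) :=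
  ⋃ i : Fin n, segment ℝ (x i) (x (i + ⟨1, by omega⟩))

section Segment

variable {E : Type*} [SeminormedAddCommGroup E] [NormedSpace ℝ E]

theorem dist_convexCombo_le {a b : ℝ} (ha : 0 ≤ a) (hb : 0 ≤ b) (hab : a + b = 1)
    {u v u' v' : E} {r : ℝ} (hu : dist u u' ≤ r) (hv : dist v v' ≤ r) :
    dist (a • u + b • v) (a • u' + b • v') ≤ r :=
  calc dist (a • u + b • v) (a • u' + b • v')
      ≤ dist (a • u) (a • u') + dist (b • v) (b • v') := dist_add_add_le _ _ _ _
    _ = a * dist u u' + b * dist v v' := by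
      rw [dist_smul₀, dist_smul₀, Real.norm_of_nonneg ha, Real.norm_of_nonneg hb]
    _ ≤ a * r + b * r := by gcongr
    _ = r := by rw [← add_mul, hab, one_mul]

theorem exists_mem_segment_dist_le {u v u' v' p : E} {r : ℝ} (hu : dist u u' ≤ r)
    (hv : dist v v' ≤ r) (hp : p ∈ segment ℝ u v) :
    ∃ q ∈ segment ℝ u' v', dist p q ≤ r := by
  obtain ⟨a, b, ha, hb, hab, rfl⟩ := hp
  exact ⟨a • u' + b • v', ⟨a, b, ha, hb, hab, rfl⟩, dist_convexCombo_le ha hb hab hu hv⟩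

end Segment

section CyclicDist

variable {n : ℕ} (hn : 3 ≤ n) (x x' : Fin n → EuclideanSpace ℝ (Fin 2))

theorem exists_shift_dist_le_cyclicDist :
    ∃ j : Fin n, ∀ i, dist (x (i + j)) (x' i) ≤ cyclicDist n hn x x' := by
  obtain ⟨j, -, hj⟩ := Finset.exists_mem_eq_inf' _
    (fun j => Finset.univ.sup' _ (fun i => dist (x (i + j)) (x' i)))
  exact ⟨j, fun i => (Finset.le_sup' (fun i => dist (x (i + j)) (x' i)) (mem_univ i)).trans
    hj.symm.le⟩

theorem cyclicDist_nonneg : 0 ≤ cyclicDist n hn x x' := by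
  obtain ⟨j, hj⟩ := exists_shift_dist_le_cyclicDist hn x x'
  exact dist_nonneg.trans (hj ⟨0, by omega⟩)

theorem cyclicDist_le_of_forall_dist_le {r : ℝ} (j : Fin n)
    (h : ∀ i, dist (x (i + j)) (x' i) ≤ r) : cyclicDist n hn x x' ≤ r :=
  (Finset.inf'_le _ (mem_univ j)).trans (Finset.sup'_le _ _ fun i _ => h i)

theorem cyclicDist_comm : cyclicDist n hn x x' = cyclicDist n hn x' x := by
  suffices key : ∀ y y' : Fin n → EuclideanSpace ℝ (Fin 2),
      cyclicDist n hn y' y ≤ cyclicDist n hn y y' from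
    le_antisymm (key x' x) (key x x')
  intro y y'
  have : NeZero n := ⟨by omega⟩
  obtain ⟨j, hj⟩ := exists_shift_dist_le_cyclicDist hn y y'
  refine cyclicDist_le_of_forall_dist_le hn y' y (-j) fun i => ?_
  rw [dist_comm, ← sub_eq_add_neg, ← sub_add_cancel i j, add_sub_cancel_right]
  exact hj (i - j)

theorem infDist_polyline_le_cyclicDist {p : EuclideanSpace ℝ (Fin 2)}
    (hp : p ∈ polyline n hn x) : Metric.infDist p (polyline n hn x') ≤ cyclicDist n hn x x' := by
  have : NeZero n := ⟨by omega⟩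
  obtain ⟨j, hj⟩ := exists_shift_dist_le_cyclicDist hn x x'
  obtain ⟨i, hpi⟩ := Set.mem_iUnion.1 hp
  have hstart : dist (x i) (x' (i - j)) ≤ cyclicDist n hn x x' := by
    simpa only [sub_add_cancel] using hj (i - j)
  have hend : dist (x (i + ⟨1, by omega⟩)) (x' (i - j + ⟨1, by omega⟩)) ≤
      cyclicDist n hn x x' := by
    simpa only [add_right_comm _ _ j, sub_add_cancel] using hj (i - j + ⟨1, by omega⟩)
  obtain ⟨q, hq, hpq⟩ := exists_mem_segment_dist_le hstart hend hpi
  exact (Metric.infDist_le_dist_of_mem (Set.mem_iUnion.2 ⟨i - j, hq⟩)).trans hpq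

end CyclicDist

theorem stmt_11 (n : ℕ) (hn : 3 ≤ n)
    (x x' : Fin n → EuclideanSpace ℝ (Fin 2)) :
    (∀ (i : Fin n) (c : ℝ), c ∈ Set.Icc (0 : ℝ) 1 →
      Metric.infDist (c • x i + (1 - c) • x (i + ⟨1, by omega⟩)) (polyline n hn x') ≤
        cyclicDist n hn x x') ∧
    Metric.hausdorffDist (polyline n hn x) (polyline n hn x') ≤ cyclicDist n hn x x' := by
  refine ⟨fun i c hc => infDist_polyline_le_cyclicDist hn x x' ?_, ?_⟩
  · exact Set.mem_iUnion.2 ⟨i, c, 1 - c, hc.1, sub_nonneg.2 hc.2, add_sub_cancel _ _, rfl⟩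
  · refine Metric.hausdorffDist_le_of_infDist (cyclicDist_nonneg hn x x')
      (fun p hp => infDist_polyline_le_cyclicDist hn x x' hp) fun p hp => ?_
    rw [cyclicDist_comm]
    exact infDist_polyline_le_cyclicDist hn x' x hp
end

section
/- Let F : U → Y be differentiable on an open set U ⊆ ℝ^N with ‖F(x+d) − F(x') − F'(x')d‖ ≤ C‖d‖² for all x' in a neighborhood of x ∈ U and all sufficiently small d, and ‖F(y) − F(z)‖ ≤ L‖y − z‖ locally near x. Then for all x' near x and all unit vectors d, ‖F'(x')d − F'(x)d‖ ≤ (2C + 2L)·‖x' − x‖^{1/2}; in particular F' is continuous at x (so F is C¹ near x). -/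
/-!
Fix a unit vector `d`, put `s = ‖x' - x‖` and step along `t • d` with `t = √s`. The quantity
`F' x' (t • d) - F' x (t • d)` is a combination of the two Taylor remainders at `x'` and `x`
(each at most `C t² = C s`) and of the two differences `F (x' + t • d) - F (x + t • d)` and
`F x' - F x` (each at most `L s` by the Lipschitz bound). Dividing by `t` gives
`‖F' x' d - F' x d‖ ≤ (2C + 2L) √s`, and the right-hand side tends to `0` as `x' → x`.
-/

open Real Filter Topology Metric

theorem norm_sub_le_of_taylor_of_lipschitz {E Y : Type*} [Add E] [SeminormedAddCommGroup Y]
    {F : E → Y} {x x' h : E} {a b : Y} {c l : ℝ}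
    (ha : ‖F (x' + h) - F x' - a‖ ≤ c) (hb : ‖F (x + h) - F x - b‖ ≤ c)
    (hh : ‖F (x' + h) - F (x + h)‖ ≤ l) (h0 : ‖F x' - F x‖ ≤ l) :
    ‖a - b‖ ≤ 2 * c + 2 * l := by
  have hsplit : a - b = (F (x + h) - F x - b) - (F (x' + h) - F x' - a)
      + (F (x' + h) - F (x + h)) - (F x' - F x) := by abel
  rw [hsplit]
  calc _ ≤ ‖F (x + h) - F x - b‖ + ‖F (x' + h) - F x' - a‖
        + ‖F (x' + h) - F (x + h)‖ + ‖F x' - F x‖ := by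
        refine (norm_sub_le _ _).trans ?_
        gcongr
        refine (norm_add_le _ _).trans ?_
        gcongr
        exact norm_sub_le _ _
    _ ≤ 2 * c + 2 * l := by linarith

section

variable {E Y : Type*} [NormedAddCommGroup E] [NormedSpace ℝ E] [NormedAddCommGroup Y]
  [NormedSpace ℝ Y]

theorem norm_apply_sub_apply_le_of_taylor_of_lipschitz {F : E → Y} {A B : E →L[ℝ] Y}
    {x x' d : E} {C L t : ℝ} (ht : 0 < t)
    (hA : ‖F (x' + t • d) - F x' - A (t • d)‖ ≤ C * t ^ 2)
    (hB : ‖F (x + t • d) - F x - B (t • d)‖ ≤ C * t ^ 2)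
    (hh : ‖F (x' + t • d) - F (x + t • d)‖ ≤ L * t ^ 2)
    (h0 : ‖F x' - F x‖ ≤ L * t ^ 2) :
    ‖A d - B d‖ ≤ (2 * C + 2 * L) * t := by
  have key := norm_sub_le_of_taylor_of_lipschitz hA hB hh h0
  rw [map_smul, map_smul, ← smul_sub, norm_smul, norm_of_nonneg ht.le] at key
  refine le_of_mul_le_mul_left ?_ ht
  linarith

theorem exists_norm_apply_sub_apply_le_mul_sqrt {F : E → Y} {F' : E → E →L[ℝ] Y}
    {V : Set E} {x : E} {C L ρ : ℝ} (hρ : 0 < ρ) (hV : V ∈ 𝓝 x)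
    (hTaylor : ∀ x' ∈ V, ∀ d : E, ‖d‖ ≤ ρ →
      ‖F (x' + d) - F x' - F' x' d‖ ≤ C * ‖d‖ ^ 2)
    (hLip : ∀ y ∈ V, ∀ z ∈ V, ‖F y - F z‖ ≤ L * ‖y - z‖) :
    ∃ δ > 0, ∀ x' : E, ‖x' - x‖ < δ → ∀ d : E, ‖d‖ = 1 →
      ‖F' x' d - F' x d‖ ≤ (2 * C + 2 * L) * √‖x' - x‖ := by
  obtain ⟨r, hr, hball⟩ := Metric.mem_nhds_iff.mp hV
  -- `t = √‖x' - x‖ < m` must stay `≤ ρ`, and `t < 1` gives `‖x' - x‖ = t² < t`,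
  -- so `x'`, `x + t • d` and `x' + t • d` all lie in `ball x r`.
  set m := min 1 (min ρ (r / 2))
  have hm : 0 < m := by positivity
  refine ⟨m ^ 2, by positivity, fun x' hx' d hd => ?_⟩
  rcases eq_or_ne x' x with rfl | hne
  · simp
  set t := √‖x' - x‖
  have ht : 0 < t := sqrt_pos.mpr (norm_pos_iff.mpr (sub_ne_zero.mpr hne))
  have hts : t ^ 2 = ‖x' - x‖ := sq_sqrt (norm_nonneg _)
  have htm : t < m := (sqrt_lt' hm).mpr hx'
  have ht1 : t < 1 := htm.trans_le (min_le_left _ _)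
  have htρ : t ≤ ρ := htm.le.trans ((min_le_right _ _).trans (min_le_left _ _))
  have htr : t < r / 2 := htm.trans_le ((min_le_right _ _).trans (min_le_right _ _))
  have hst : ‖x' - x‖ < t := by nlinarith
  have hnd : ‖t • d‖ = t := by rw [norm_smul, hd, mul_one, norm_of_nonneg ht.le]
  have hxV : x ∈ V := mem_of_mem_nhds hV
  have hx'V : x' ∈ V := hball (mem_ball_iff_norm.mpr (by linarith))
  have hxdV : x + t • d ∈ V :=
    hball (mem_ball_iff_norm.mpr (by rw [add_sub_cancel_left, hnd]; linarith))
  have hx'dV : x' + t • d ∈ V := by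
    refine hball (mem_ball_iff_norm.mpr ?_)
    calc ‖x' + t • d - x‖ = ‖(x' - x) + t • d‖ := by abel_nf
      _ ≤ ‖x' - x‖ + t := (norm_add_le _ _).trans_eq (by rw [hnd])
      _ < r := by linarith
  have hA := hTaylor x' hx'V (t • d) (hnd.symm ▸ htρ)
  have hB := hTaylor x hxV (t • d) (hnd.symm ▸ htρ)
  have hh := hLip _ hx'dV _ hxdV
  rw [add_sub_add_right_eq_sub] at hh
  rw [hnd] at hA hB
  rw [← hts] at hh
  exact norm_apply_sub_apply_le_of_taylor_of_lipschitz ht hA hB hh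
    (hts ▸ hLip x' hx'V x hxV)

end

theorem continuousAt_of_norm_sub_le_mul_sqrt {X Z : Type*} [SeminormedAddCommGroup X]
    [SeminormedAddCommGroup Z] {G : X → Z} {x : X} {K : ℝ}
    (h : ∀ᶠ x' in 𝓝 x, ‖G x' - G x‖ ≤ K * √‖x' - x‖) : ContinuousAt G x := by
  rw [ContinuousAt, tendsto_iff_norm_sub_tendsto_zero]
  refine squeeze_zero' (Eventually.of_forall fun _ => norm_nonneg _) h ?_
  have hcont : Continuous fun x' => K * √‖x' - x‖ := by fun_prop
  simpa using hcont.tendsto x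

theorem stmt_18_general (N : ℕ) {Y : Type*} [NormedAddCommGroup Y] [NormedSpace ℝ Y]
    (F : EuclideanSpace ℝ (Fin N) → Y)
    (F' : EuclideanSpace ℝ (Fin N) → (EuclideanSpace ℝ (Fin N) →L[ℝ] Y))
    (x : EuclideanSpace ℝ (Fin N))
    (C L ρ : ℝ) (hC : 0 < C) (hL : 0 < L) (hρ : 0 < ρ)
    (V : Set (EuclideanSpace ℝ (Fin N))) (hV : V ∈ nhds x)
    (hTaylor : ∀ x' ∈ V, ∀ d : EuclideanSpace ℝ (Fin N), ‖d‖ ≤ ρ →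
      ‖F (x' + d) - F x' - F' x' d‖ ≤ C * ‖d‖ ^ 2)
    (hLip : ∀ y ∈ V, ∀ z ∈ V, ‖F y - F z‖ ≤ L * ‖y - z‖) :
    (∃ δ : ℝ, 0 < δ ∧ ∀ x' : EuclideanSpace ℝ (Fin N), ‖x' - x‖ < δ →
      ∀ d : EuclideanSpace ℝ (Fin N), ‖d‖ = 1 →
        ‖F' x' d - F' x d‖ ≤ (2 * C + 2 * L) * Real.sqrt ‖x' - x‖) ∧
    ContinuousAt F' x := by
  obtain ⟨δ, hδ, hbound⟩ := exists_norm_apply_sub_apply_le_mul_sqrt hρ hV hTaylor hLip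
  refine ⟨⟨δ, hδ, hbound⟩, continuousAt_of_norm_sub_le_mul_sqrt (K := 2 * C + 2 * L) ?_⟩
  filter_upwards [ball_mem_nhds x hδ] with x' hx'
  exact ContinuousLinearMap.opNorm_le_of_unit_norm (by positivity)
    fun d hd => by simpa using hbound x' (mem_ball_iff_norm.mp hx') d hd

theorem stmt_18 (N : ℕ) {Y : Type*} [NormedAddCommGroup Y] [NormedSpace ℝ Y]
    [CompleteSpace Y]
    (U : Set (EuclideanSpace ℝ (Fin N))) (hU : IsOpen U)
    (F : EuclideanSpace ℝ (Fin N) → Y)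
    (F' : EuclideanSpace ℝ (Fin N) → (EuclideanSpace ℝ (Fin N) →L[ℝ] Y))
    (hdiff : ∀ z ∈ U, HasFDerivAt F (F' z) z)
    (x : EuclideanSpace ℝ (Fin N)) (hx : x ∈ U)
    (C L ρ : ℝ) (hC : 0 < C) (hL : 0 < L) (hρ : 0 < ρ)
    (V : Set (EuclideanSpace ℝ (Fin N))) (hV : V ∈ nhds x) (hVU : V ⊆ U)
    (hTaylor : ∀ x' ∈ V, ∀ d : EuclideanSpace ℝ (Fin N), ‖d‖ ≤ ρ →
      ‖F (x' + d) - F x' - F' x' d‖ ≤ C * ‖d‖ ^ 2)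
    (hLip : ∀ y ∈ V, ∀ z ∈ V, ‖F y - F z‖ ≤ L * ‖y - z‖) :
    (∃ δ : ℝ, 0 < δ ∧ ∀ x' : EuclideanSpace ℝ (Fin N), ‖x' - x‖ < δ →
      ∀ d : EuclideanSpace ℝ (Fin N), ‖d‖ = 1 →
        ‖F' x' d - F' x d‖ ≤ (2 * C + 2 * L) * Real.sqrt ‖x' - x‖) ∧
    ContinuousAt F' x :=
  stmt_18_general N F F' x C L ρ hC hL hρ V hV hTaylor hLip
end

section
/- Let λ > 1, α ∈ (0, π). Then the equation sin(γ(π − α)) = λ·sin(γπ) has a solution γ₁ in the open interval (1/2, 1). -/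
open Real

theorem exists_sin_mul_eq_mul_sin_mul_pi {lam β : ℝ} (hlam : 1 < lam) (hβ0 : 0 < β)
    (hβπ : β < π) :
    ∃ γ ∈ Set.Ioo (1 / 2 : ℝ) 1, sin (γ * β) = lam * sin (γ * π) := by
  set f : ℝ → ℝ := fun γ => sin (γ * β) - lam * sin (γ * π)
  have hcont : ContinuousOn f (Set.Icc (1 / 2) 1) := by fun_prop
  have hf_half : f (1 / 2) < 0 := by
    have : sin (1 / 2 * π) = 1 := by rw [one_div_mul_eq_div, sin_pi_div_two]
    simp only [f, this, mul_one]
    linarith [sin_le_one (1 / 2 * β)]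
  have hf_one : 0 < f 1 := by
    simpa [f] using sin_pos_of_pos_of_lt_pi hβ0 hβπ
  obtain ⟨γ, hγ, hfγ⟩ := intermediate_value_Ioo (by norm_num) hcont ⟨hf_half, hf_one⟩
  exact ⟨γ, hγ, sub_eq_zero.mp hfγ⟩

theorem stmt_19 (lam α : ℝ) (hlam : 1 < lam) (hα0 : 0 < α) (hαπ : α < π) :
    ∃ γ₁ : ℝ, 1 / 2 < γ₁ ∧ γ₁ < 1 ∧
      Real.sin (γ₁ * (π - α)) = lam * Real.sin (γ₁ * π) := by
  obtain ⟨γ, ⟨hγ_gt, hγ_lt⟩, hγ⟩ :=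
    exists_sin_mul_eq_mul_sin_mul_pi hlam (sub_pos.mpr hαπ) (sub_lt_self π hα0)
  exact ⟨γ, hγ_gt, hγ_lt, hγ⟩
end
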